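/- arXiv:0909.5581 — 2 statements merged into one kernel-verified Lean document; each statement's English description precedes it below -/
import Mathlib

section
/- For all n and 0 ≤ k ≤ n: (q-1)^{n-k} q^{rk} S(n,k,r) = ∑_{i} (-1)^{n-i} q^{ri} C(n,i) [i choose k]_q, where C(n,i) is the ordinary binomial coefficient and [i choose k]_q the Gaussian binomial coefficient. -/
noncomputable section

open Finset Polynomial

/-- q-analogue [m] = (1-q^m)/(1-q) = 1 + q + ... + q^(m-1). -/
def qb (q : ℚ) (m : ℕ) : ℚ := ∑ i ∈ Finset.range m, q ^ i

/-- q-factorial [n]! -/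
def qfact (q : ℚ) (n : ℕ) : ℚ := ∏ i ∈ Finset.range n, qb q (i + 1)

/-- Gaussian binomial coefficient [n choose k]_q via the q-Pascal recurrence. -/
def qbinom (q : ℚ) : ℕ → ℕ → ℚ
  | _, 0 => 1
  | 0, _ + 1 => 0
  | n + 1, k + 1 => qbinom q n k + q ^ (k + 1) * qbinom q n (k + 1)

/-- Generalized q-Stirling numbers S(n,k,r). -/
def qS (q : ℚ) (r : ℕ) : ℕ → ℕ → ℚ
  | 0, 0 => 1
  | 0, _ + 1 => 0
  | n + 1, 0 => qb q r * qS q r n 0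
  | n + 1, k + 1 => qS q r n k + qb q (k + 1 + r) * qS q r n (k + 1)

/-- Generalized falling factorial ⟨x⟩_{r,k} = ∏_{j=0}^{k-1} (x - [r+j]). -/
def qfall (q : ℚ) (r : ℕ) (x : ℚ) (k : ℕ) : ℚ := ∏ j ∈ Finset.range k, (x - qb q (r + j))

lemma qbinom_zero (q : ℚ) (n : ℕ) : qbinom q n 0 = 1 := by cases n <;> rfl

lemma qb_mul (q : ℚ) (m : ℕ) : (q-1) * qb q m = q^m - 1 := by
  rw [qb, mul_comm]; exact geom_sum_mul q m

lemma qbinom_eq_zero (q : ℚ) : ∀ n k, n < k → qbinom q n k = 0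
  | 0, _+1, _ => rfl
  | n+1, k+1, h => by
    show qbinom q n k + q ^ (k + 1) * qbinom q n (k + 1) = 0
    rw [qbinom_eq_zero q n k (by omega), qbinom_eq_zero q n (k+1) (by omega)]; ring

lemma qS_eq_zero (q : ℚ) (r : ℕ) : ∀ n k, n < k → qS q r n k = 0
  | 0, _+1, _ => rfl
  | n+1, k+1, h => by
    show qS q r n k + qb q (k + 1 + r) * qS q r n (k + 1) = 0
    rw [qS_eq_zero q r n k (by omega), qS_eq_zero q r n (k+1) (by omega)]; ring

lemma shiftk (q : ℚ) (r n k : ℕ) :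
    (-1:ℚ)^(n+1) * q^(r*0) * (Nat.choose (n+1) 0 : ℚ) * qbinom q 0 k
      + ∑ i ∈ Finset.range (n+1), (-1:ℚ)^(n-i) * q^(r*(i+1)) * (Nat.choose n (i+1) : ℚ) * qbinom q (i+1) k
    = - ∑ i ∈ Finset.range (n+1), (-1:ℚ)^(n-i) * q^(r*i) * (Nat.choose n i : ℚ) * qbinom q i k := by
  set h : ℕ → ℚ := fun j => (-1:ℚ)^(n+1-j) * q^(r*j) * (Nat.choose n j : ℚ) * qbinom q j k with hh
  have e1 : (-1:ℚ)^(n+1) * q^(r*0) * (Nat.choose (n+1) 0 : ℚ) * qbinom q 0 k = h 0 := by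
    simp [hh]
  have e2 : ∑ i ∈ Finset.range (n+1), (-1:ℚ)^(n-i) * q^(r*(i+1)) * (Nat.choose n (i+1) : ℚ) * qbinom q (i+1) k
      = ∑ i ∈ Finset.range (n+1), h (i+1) := by
    refine Finset.sum_congr rfl fun i hi => ?_
    simp [hh, Nat.succ_sub_succ]
  rw [e1, e2, add_comm, ← Finset.sum_range_succ', Finset.sum_range_succ]
  have hn1 : h (n+1) = 0 := by simp [hh, Nat.choose_succ_self]
  rw [hn1, add_zero]
  rw [← Finset.sum_neg_distrib]
  refine Finset.sum_congr rfl fun j hj => ?_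
  have hj' : j < n + 1 := Finset.mem_range.mp hj
  have : n + 1 - j = (n - j) + 1 := by omega
  rw [hh]; simp only; rw [this, pow_succ]; ring

lemma TstepS (q : ℚ) (r n k : ℕ) :
    ∑ i ∈ Finset.range (n+2), (-1:ℚ)^(n+1-i) * q^(r*i) * (Nat.choose (n+1) i : ℚ) * qbinom q i (k+1)
    = q^r * ∑ i ∈ Finset.range (n+1), (-1:ℚ)^(n-i) * q^(r*i) * (Nat.choose n i : ℚ) * qbinom q i k
      + (q^(k+1+r) - 1) * ∑ i ∈ Finset.range (n+1), (-1:ℚ)^(n-i) * q^(r*i) * (Nat.choose n i : ℚ) * qbinom q i (k+1) := by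
  rw [Finset.sum_range_succ']
  have e : ∀ i ∈ Finset.range (n+1),
      (-1:ℚ)^(n+1-(i+1)) * q^(r*(i+1)) * (Nat.choose (n+1) (i+1) : ℚ) * qbinom q (i+1) (k+1)
      = q^r * ((-1:ℚ)^(n-i) * q^(r*i) * (Nat.choose n i : ℚ) * qbinom q i k)
        + q^(k+1+r) * ((-1:ℚ)^(n-i) * q^(r*i) * (Nat.choose n i : ℚ) * qbinom q i (k+1))
        + (-1:ℚ)^(n-i) * q^(r*(i+1)) * (Nat.choose n (i+1) : ℚ) * qbinom q (i+1) (k+1) := by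
    intro i hi
    rw [Nat.succ_sub_succ, Nat.choose_succ_succ,
      show qbinom q (i+1) (k+1) = qbinom q i k + q^(k+1) * qbinom q i (k+1) from rfl]
    push_cast
    ring
  rw [Finset.sum_congr rfl e, Finset.sum_add_distrib, Finset.sum_add_distrib,
    ← Finset.mul_sum, ← Finset.mul_sum]
  simp only [Nat.sub_zero]
  linear_combination shiftk q r n (k+1)

lemma Tstep0 (q : ℚ) (r n : ℕ) :
    ∑ i ∈ Finset.range (n+2), (-1:ℚ)^(n+1-i) * q^(r*i) * (Nat.choose (n+1) i : ℚ) * qbinom q i 0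
    = (q^r - 1) * ∑ i ∈ Finset.range (n+1), (-1:ℚ)^(n-i) * q^(r*i) * (Nat.choose n i : ℚ) * qbinom q i 0 := by
  rw [Finset.sum_range_succ']
  have e : ∀ i ∈ Finset.range (n+1),
      (-1:ℚ)^(n+1-(i+1)) * q^(r*(i+1)) * (Nat.choose (n+1) (i+1) : ℚ) * qbinom q (i+1) 0
      = q^r * ((-1:ℚ)^(n-i) * q^(r*i) * (Nat.choose n i : ℚ) * qbinom q i 0)
        + (-1:ℚ)^(n-i) * q^(r*(i+1)) * (Nat.choose n (i+1) : ℚ) * qbinom q (i+1) 0 := by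
    intro i hi
    rw [Nat.succ_sub_succ, Nat.choose_succ_succ, qbinom_zero, qbinom_zero]
    push_cast
    ring
  rw [Finset.sum_congr rfl e, Finset.sum_add_distrib, ← Finset.mul_sum]
  simp only [Nat.sub_zero]
  linear_combination shiftk q r n 0

lemma qStirling_key (q : ℚ) (r : ℕ) : ∀ n k,
    (q - 1) ^ (n - k) * q ^ (r * k) * qS q r n k =
      ∑ i ∈ Finset.range (n + 1),
        (-1 : ℚ) ^ (n - i) * q ^ (r * i) * (Nat.choose n i : ℚ) * qbinom q i k := by
  intro n
  induction n with
  | zero =>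
    intro k
    cases k with
    | zero => simp [qS, qbinom_zero]
    | succ s => simp [show qS q r 0 (s+1) = 0 from rfl, show qbinom q 0 (s+1) = 0 from rfl]
  | succ n ih =>
    intro k
    cases k with
    | zero =>
      rw [show qS q r (n+1) 0 = qb q r * qS q r n 0 from rfl,
        show (n+1+1) = n+2 from rfl, Tstep0, ← ih 0]
      simp only [Nat.sub_zero, mul_zero, pow_zero]
      linear_combination ((q-1)^n * qS q r n 0) * qb_mul q r
    | succ s =>
      rw [show qS q r (n+1) (s+1) = qS q r n s + qb q (s + 1 + r) * qS q r n (s + 1) from rfl,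
        show (n+1+1) = n+2 from rfl, TstepS, ← ih s, ← ih (s+1), Nat.succ_sub_succ]
      rcases Nat.lt_or_ge s n with hs | hs
      · have hns : n - s = (n - (s+1)) + 1 := by omega
        rw [hns, pow_succ]
        linear_combination ((q-1)^(n-(s+1)) * q^(r*(s+1)) * qS q r n (s+1)) * qb_mul q (s+1+r)
      · rw [qS_eq_zero q r n (s+1) (by omega)]
        ring

/-- (q-1)^{n-k} q^{rk} S(n,k,r) = ∑_i (-1)^{n-i} q^{ri} C(n,i) [i choose k]_q. -/
theorem qStirling_inversion (q : ℚ) (r : ℕ) (n k : ℕ) (hk : k ≤ n) :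
    (q - 1) ^ (n - k) * q ^ (r * k) * qS q r n k =
      ∑ i ∈ Finset.range (n + 1),
        (-1 : ℚ) ^ (n - i) * q ^ (r * i) * (Nat.choose n i : ℚ) * qbinom q i k := by
  exact qStirling_key q r n k
end
end

section
/- The shifted Hankel determinant det(Φ_{i+j+1}(x,r))_{i,j=0}^{n-1} equals det(Φ_{i+j}(x,r))_{i,j=0}^{n-1} · ∑_{k=0}^n [n choose k]_q (q^{n-1+r} x)^k ∏_{j=0}^{n-k-1} [r+j]. -/
noncomputable section

open Finset Polynomial

/-- Second generalized q-exponential polynomial Φ_n(x,r). -/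
def qPhi (q : ℚ) (r : ℕ) (n : ℕ) (x : ℚ) : ℚ :=
  ∑ k ∈ Finset.range (n + 1), qS q r n k * q ^ Nat.choose k 2 * (q ^ r * x) ^ k

/-!
Expanding `Φ_{n+m}(x,r) = ∑ₖ S(n,k,r) q^(k(k-1)/2) (q^r x)^k Φ_m(x,r+k)` factors both Hankel
matrices through one lower triangular matrix `A`: `(Φ_{i+j}) = A B` and `(Φ_{i+j+1}) = A C` with
`B = (Φ_j(x,r+k))_{k,j}` and `C = (Φ_{j+1}(x,r+k))_{k,j}`. The recurrence
`Φ_{j+1}(x,s) = [s] Φ_j(x,s) + q^s x Φ_j(x,s+1)` gives `C = G B` for a matrix `G` that is upper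
bidiagonal except for its last row, which has to express `Φ_j(x,r+n)` through the `Φ_j(x,r+t)`,
`t < n`. Such a relation exists because `Φ_j(x,s+1) = ∑ᵢ C(j,i) q^i Φ_i(x,s)`: the shift `s ↦ s+1`
acts triangularly with eigenvalues `q^i` on `Φ_0, …, Φ_{n-1}`, so `∏_{i<n} (E - q^i)` kills them,
and Gauss's q-binomial theorem gives its coefficients. The ratio of the two determinants is then
`det G`, which an expansion along the first column evaluates.
-/

section Bidiagonal

variable {R : Type*} [CommRing R]

def bidiagWithLastRow (m : ℕ) (a b w : ℕ → R) : Matrix (Fin (m + 1)) (Fin (m + 1)) R :=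
  Matrix.of fun i j =>
    if (i : ℕ) = m then w j else if (j : ℕ) = i then a i else if (j : ℕ) = i + 1 then b i else 0

theorem bidiagWithLastRow_submatrix_succAbove_zero (m : ℕ) (a b w : ℕ → R) :
    (bidiagWithLastRow (m + 1) a b w).submatrix (Fin.succAbove 0) Fin.succ =
      bidiagWithLastRow m (fun k => a (k + 1)) (fun k => b (k + 1)) (fun k => w (k + 1)) := by
  ext i j
  simp [bidiagWithLastRow]

theorem det_bidiagWithLastRow_submatrix_succAbove_last (m : ℕ) (a b w : ℕ → R) :
    ((bidiagWithLastRow (m + 1) a b w).submatrix (Fin.last (m + 1)).succAbove Fin.succ).det =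
      ∏ k ∈ range (m + 1), b k := by
  rw [Matrix.det_of_isLowerTriangular, ← Fin.prod_univ_eq_prod_range]
  · refine Finset.prod_congr rfl fun i _ => ?_
    simp [bidiagWithLastRow, i.isLt.ne]
  · intro i j hij
    have : (i : ℕ) < j := hij
    have : (j : ℕ) < m + 1 := j.isLt
    simp only [bidiagWithLastRow, Matrix.submatrix_apply, Matrix.of_apply, Fin.val_succ,
      Fin.succAbove_last, Fin.val_castSucc]
    rw [if_neg (by omega), if_neg (by omega), if_neg (by omega)]

theorem det_bidiagWithLastRow (m : ℕ) (a b w : ℕ → R) :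
    (bidiagWithLastRow m a b w).det =
      ∑ j ∈ range (m + 1), (-1) ^ (m + j) * w j * (∏ k ∈ range j, a k) * ∏ k ∈ Ico j m, b k := by
  induction m generalizing a b w with
  | zero => simp [bidiagWithLastRow]
  | succ m ih =>
    have hcol : ∀ i : Fin m, bidiagWithLastRow (m + 1) a b w i.castSucc.succ 0 = 0 := fun i => by
      simp [bidiagWithLastRow, i.isLt.ne]
    have h00 : bidiagWithLastRow (m + 1) a b w 0 0 = a 0 := by simp [bidiagWithLastRow]
    have hlast : bidiagWithLastRow (m + 1) a b w (Fin.last (m + 1)) 0 = w 0 := by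
      simp [bidiagWithLastRow]
    rw [Matrix.det_succ_column_zero, Fin.sum_univ_succ, Fin.sum_univ_castSucc,
      bidiagWithLastRow_submatrix_succAbove_zero, ih, Fin.succ_last,
      det_bidiagWithLastRow_submatrix_succAbove_last, h00, hlast, sum_range_succ' _ (m + 1)]
    simp only [hcol, Fin.val_zero, Fin.val_last, pow_zero, one_mul, mul_zero, zero_mul,
      sum_const_zero, zero_add, mul_sum]
    congr 1
    · refine sum_congr rfl fun j _ => ?_
      rw [prod_range_succ', ← prod_Ico_add']
      ring
    · simp

theorem det_bidiagWithLastRow_sub_mul (m : ℕ) (a b c : ℕ → R) (hc : c (m + 1) = 1) :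
    (bidiagWithLastRow m a b fun t => (if t = m then a m else 0) - b m * c t).det =
      ∑ j ∈ range (m + 1 + 1),
        (-1) ^ (m + 1 + j) * c j * (∏ k ∈ range j, a k) * ∏ k ∈ Ico j (m + 1), b k := by
  have hterm : ∀ j ∈ range (m + 1),
      (-1) ^ (m + j) * ((if j = m then a m else 0) - b m * c j) * (∏ k ∈ range j, a k) *
          ∏ k ∈ Ico j m, b k =
        (if j = m then (∏ k ∈ range m, a k) * a m else 0) +
          (-1) ^ (m + 1 + j) * c j * (∏ k ∈ range j, a k) * ∏ k ∈ Ico j (m + 1), b k := by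
    intro j hj
    rw [prod_Ico_succ_top (Nat.lt_succ_iff.1 (mem_range.1 hj)), add_right_comm, pow_succ]
    split_ifs with hjm
    · subst hjm
      rw [Ico_self, prod_empty, ← two_mul, pow_mul, neg_one_sq, one_pow]
      ring
    · ring
  rw [det_bidiagWithLastRow, sum_congr rfl hterm, sum_add_distrib, sum_ite_eq',
    if_pos (self_mem_range_succ m), sum_range_succ _ (m + 1), hc, Ico_self, prod_empty,
    prod_range_succ a m, ← two_mul, pow_mul, neg_one_sq, one_pow]
  ring

theorem bidiagWithLastRow_mul_of_apply {ι : Type*} (m : ℕ) (a b w : ℕ → R) (v : ℕ → ι → R)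
    (i : Fin (m + 1)) (j : ι) :
    (bidiagWithLastRow m a b w * Matrix.of fun (k : Fin (m + 1)) j => v k j) i j =
      if (i : ℕ) = m then ∑ t ∈ range (m + 1), w t * v t j
      else a i * v i j + b i * v (i + 1) j := by
  rw [Matrix.mul_apply]
  simp only [bidiagWithLastRow, Matrix.of_apply]
  rw [Fin.sum_univ_eq_sum_range (fun t => (if (i : ℕ) = m then w t else if t = i then a i
    else if t = i + 1 then b i else 0) * v t j)]
  split_ifs with hi
  · rfl
  · have hsplit : ∀ t, (if t = (i : ℕ) then a i else if t = i + 1 then b i else 0) =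
        (if (i : ℕ) = t then a i else 0) + (if (i : ℕ) + 1 = t then b i else 0) := fun t => by
      split_ifs <;> first | omega | simp
    have : (i : ℕ) + 1 < m + 1 := by omega
    simp [hsplit, add_mul, sum_add_distrib, this, i.isLt]

end Bidiagonal

theorem prod_Ico_sub_mul_pow_choose_two {M : Type*} [CommMonoid M] (q x : M) (r : ℕ) {N k : ℕ}
    (h : k ≤ N) :
    (∏ i ∈ Ico (N - k) N, (q ^ (r + i) * x)) * q ^ k.choose 2 = (q ^ (N - 1 + r) * x) ^ k := by
  induction k with
  | zero => simp
  | succ k ih =>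
    have hexp : q ^ (r + (N - (k + 1))) * q ^ k = q ^ (N - 1 + r) := by
      rw [← pow_add]; congr 1; omega
    rw [prod_eq_prod_Ico_succ_bot (by omega), show N - (k + 1) + 1 = N - k by omega,
      Nat.choose_succ_succ', Nat.choose_one_right, pow_add q k, pow_succ, ← ih (by omega), ← hexp]
    ac_rfl

section ShiftOperator

variable (R : Type*) [CommSemiring R]

def shiftOp : Module.End R (ℕ → R) := LinearMap.funLeft R R (· + 1)

variable {R}

theorem shiftOp_pow_apply (t : ℕ) (g : ℕ → R) (s : ℕ) : (shiftOp R ^ t) g s = g (s + t) := by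
  induction t generalizing g s with
  | zero => rfl
  | succ t ih => rw [pow_succ, Module.End.mul_apply, ih]; rfl

theorem aeval_shiftOp_apply (p : R[X]) {N : ℕ} (hp : p.natDegree < N) (g : ℕ → R) (s : ℕ) :
    aeval (shiftOp R) p g s = ∑ t ∈ range N, p.coeff t * g (s + t) := by
  conv_lhs => rw [p.as_sum_range' N hp]
  simp [aeval_monomial, shiftOp_pow_apply]

end ShiftOperator

section GaussPoly

variable {R : Type*} [CommRing R]

def gaussPoly (a q : R) (n : ℕ) : R[X] := ∏ i ∈ range n, (X - C (a * q ^ i))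

theorem natDegree_gaussPoly [Nontrivial R] (a q : R) (n : ℕ) : (gaussPoly a q n).natDegree = n := by
  rw [gaussPoly, natDegree_finsetProd_X_sub_C_eq_card, card_range]

theorem gaussPoly_monic (a q : R) (n : ℕ) : (gaussPoly a q n).Monic :=
  monic_prod_X_sub_C _ _

theorem coeff_gaussPoly_self [Nontrivial R] (a q : R) (n : ℕ) : (gaussPoly a q n).coeff n = 1 := by
  simpa [natDegree_gaussPoly] using (gaussPoly_monic a q n).coeff_natDegree

theorem gaussPoly_succ (a q : R) (n : ℕ) :
    gaussPoly a q (n + 1) = (X - C a) * gaussPoly (a * q) q n := by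
  simp only [gaussPoly, prod_range_succ', pow_succ', pow_zero, mul_one, mul_assoc]
  ring

end GaussPoly

theorem qb_succ (q : ℚ) (m : ℕ) : qb q (m + 1) = 1 + q * qb q m := by
  simp only [qb, sum_range_succ', pow_zero, pow_succ', mul_sum]
  ring

theorem qbinom_eq_zero_of_lt (q : ℚ) {n k : ℕ} (h : n < k) : qbinom q n k = 0 := by
  induction n generalizing k with
  | zero => cases k with
    | zero => omega
    | succ k => rfl
  | succ n ih => cases k with
    | zero => omega
    | succ k => simp only [qbinom, ih (show n < k by omega), ih (show n < k + 1 by omega), mul_zero,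
        add_zero]

-- Gauss's q-binomial theorem. Splitting off the first factor `X - a` (hence the general `a`) makes
-- the induction follow the defining recurrence of `qbinom`.
theorem coeff_gaussPoly_sub (a q : ℚ) {n k : ℕ} (h : k ≤ n) :
    (gaussPoly a q n).coeff (n - k) = (-a) ^ k * q ^ k.choose 2 * qbinom q n k := by
  induction n generalizing a k with
  | zero =>
    obtain rfl : k = 0 := by omega
    simp [gaussPoly, qbinom]
  | succ n ih =>
    rcases k with _ | k
    · simpa [qbinom] using coeff_gaussPoly_self a q (n + 1)
    · rw [gaussPoly_succ]
      rcases Nat.lt_or_ge k n with hk | hk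
      · obtain ⟨j, hj⟩ : ∃ j, n - k = j + 1 := ⟨n - k - 1, by omega⟩
        rw [Nat.add_sub_add_right, hj, coeff_X_sub_C_mul, ← hj, show j = n - (k + 1) by omega,
          ih _ hk.le, ih _ (show k + 1 ≤ n by omega)]
        simp only [qbinom, Nat.choose_succ_succ', Nat.choose_one_right]
        ring
      · obtain rfl : k = n := by omega
        have h0 := ih (a * q) (le_refl k)
        rw [Nat.sub_self] at h0
        simp [h0, qbinom, qbinom_eq_zero_of_lt q (Nat.lt_succ_self k), Nat.choose_succ_succ']
        ring

theorem qS_eq_zero_of_lt (q : ℚ) (r : ℕ) {n k : ℕ} (h : n < k) : qS q r n k = 0 := by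
  induction n generalizing k with
  | zero => cases k with
    | zero => omega
    | succ k => rfl
  | succ n ih => cases k with
    | zero => omega
    | succ k => simp only [qS, ih (show n < k by omega), ih (show n < k + 1 by omega), mul_zero,
        add_zero]

theorem qS_succ_succ' (q : ℚ) (r m k : ℕ) :
    qS q r (m + 1) (k + 1) = qb q r * qS q r m (k + 1) + qS q (r + 1) m k := by
  induction m generalizing k with
  | zero => cases k <;> simp [qS]
  | succ m ih => cases k with
    | zero =>
      have h := ih 0
      simp only [qS, zero_add] at h ⊢
      rw [add_comm 1 r] at h ⊢
      linear_combination qb q (r + 1) * h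
    | succ k =>
      have h0 := ih k
      have h1 := ih (k + 1)
      simp only [qS] at h0 h1 ⊢
      rw [show k + 1 + (r + 1) = k + 1 + 1 + r by omega]
      linear_combination h0 + qb q (k + 1 + 1 + r) * h1

def phiCoeff (q : ℚ) (r : ℕ) (x : ℚ) (n k : ℕ) : ℚ := qS q r n k * q ^ k.choose 2 * (q ^ r * x) ^ k

section PhiCoeff

variable (q : ℚ) (r : ℕ) (x : ℚ)

theorem phiCoeff_eq_zero_of_lt {n k : ℕ} (h : n < k) : phiCoeff q r x n k = 0 := by
  simp [phiCoeff, qS_eq_zero_of_lt q r h]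

theorem phiCoeff_zero_zero : phiCoeff q r x 0 0 = 1 := by
  simp [phiCoeff, qS]

theorem phiCoeff_succ_zero (n : ℕ) : phiCoeff q r x (n + 1) 0 = qb q r * phiCoeff q r x n 0 := by
  simp only [phiCoeff, qS]
  ring

theorem phiCoeff_succ_succ (n k : ℕ) :
    phiCoeff q r x (n + 1) (k + 1) =
      qb q r * phiCoeff q r x n (k + 1) + q ^ r * x * phiCoeff q (r + 1) x n k := by
  simp only [phiCoeff, qS_succ_succ', Nat.choose_succ_succ', Nat.choose_one_right, pow_add,
    pow_succ, mul_pow]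
  ring

theorem qPhi_eq_sum_phiCoeff {n N : ℕ} (h : n < N) :
    qPhi q r n x = ∑ k ∈ range N, phiCoeff q r x n k :=
  sum_subset (range_subset_range.2 h) fun _ _ hk =>
    phiCoeff_eq_zero_of_lt q r x (by simpa using hk)

end PhiCoeff

section QPhi

variable (q x : ℚ)

theorem qPhi_zero (r : ℕ) : qPhi q r 0 x = 1 := by
  simp [qPhi, qS]

theorem qPhi_succ (r n : ℕ) :
    qPhi q r (n + 1) x = qb q r * qPhi q r n x + q ^ r * x * qPhi q (r + 1) n x := by
  calc qPhi q r (n + 1) x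
      = ∑ k ∈ range (n + 1), phiCoeff q r x (n + 1) (k + 1) + phiCoeff q r x (n + 1) 0 :=
        sum_range_succ' (phiCoeff q r x (n + 1)) (n + 1)
    _ = qb q r * (∑ k ∈ range (n + 1), phiCoeff q r x n (k + 1) + phiCoeff q r x n 0) +
          q ^ r * x * ∑ k ∈ range (n + 1), phiCoeff q (r + 1) x n k := by
        simp only [phiCoeff_succ_succ, phiCoeff_succ_zero, sum_add_distrib, mul_add, mul_sum]
        ring
    _ = _ := by
        rw [← sum_range_succ', ← qPhi_eq_sum_phiCoeff q r x (show n < n + 2 by omega)]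
        rfl

theorem qPhi_add (r m : ℕ) {n N : ℕ} (h : n < N) :
    qPhi q r (n + m) x = ∑ k ∈ range N, phiCoeff q r x n k * qPhi q (r + k) m x := by
  induction n generalizing r N with
  | zero =>
    obtain ⟨N, rfl⟩ : ∃ N', N = N' + 1 := ⟨N - 1, by omega⟩
    rw [sum_range_succ']
    simp [phiCoeff_eq_zero_of_lt, phiCoeff_zero_zero]
  | succ n ih =>
    obtain ⟨N, rfl⟩ : ∃ N', N = N' + 1 := ⟨N - 1, by omega⟩
    rw [show n + 1 + m = n + m + 1 by omega, qPhi_succ, ih r (by omega : n < N + 1),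
      ih (r + 1) (by omega : n < N), sum_range_succ' _ N, sum_range_succ' _ N]
    have hr : ∀ k, r + 1 + k = r + (k + 1) := fun k => by omega
    simp only [phiCoeff_succ_succ, phiCoeff_succ_zero, add_mul, mul_add, sum_add_distrib, mul_sum,
      hr, mul_assoc]
    ring

theorem qPhi_shift (r n : ℕ) :
    qPhi q (r + 1) n x = ∑ i ∈ range (n + 1), (n.choose i : ℚ) * (q ^ i * qPhi q r i x) := by
  induction n generalizing r with
  | zero => simp [qPhi_zero]
  | succ n ih =>
    have hsucc : ∀ i, q ^ (i + 1) * qPhi q r (i + 1) x =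
        q * qb q r * (q ^ i * qPhi q r i x) + q ^ (r + 1) * x * (q ^ i * qPhi q (r + 1) i x) := by
      intro i
      rw [qPhi_succ]
      ring
    rw [sum_choose_succ_mul (fun i _ => q ^ i * qPhi q r i x), ← ih]
    simp only [hsucc, mul_add, sum_add_distrib, mul_left_comm _ (q * qb q r),
      mul_left_comm _ (q ^ (r + 1) * x), ← mul_sum, ← ih]
    rw [qPhi_succ, qb_succ]
    ring

end QPhi

theorem aeval_gaussPoly_qPhi_eq_zero (q x : ℚ) {j n : ℕ} (h : j < n) :
    aeval (shiftOp ℚ) (gaussPoly 1 q n) (fun s => qPhi q s j x) = 0 := by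
  induction n generalizing j with
  | zero => omega
  | succ n ih =>
    rw [gaussPoly, prod_range_succ, ← gaussPoly]
    rcases Nat.lt_succ_iff_lt_or_eq.1 h with hj | rfl
    · rw [mul_comm, map_mul, Module.End.mul_apply, ih hj, map_zero]
    · have hstep : aeval (shiftOp ℚ) (X - C (1 * q ^ j)) (fun s => qPhi q s j x) =
          ∑ i ∈ range j, ((j.choose i : ℚ) * q ^ i) • fun s => qPhi q s i x := by
        ext s
        rw [map_sub, aeval_X, aeval_C, LinearMap.sub_apply, Module.algebraMap_end_apply]
        simp [shiftOp, qPhi_shift, sum_range_succ, mul_assoc]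
      rw [map_mul, Module.End.mul_apply, hstep, map_sum]
      exact sum_eq_zero fun i hi => by rw [map_smul, ih (mem_range.1 hi), smul_zero]

theorem qPhi_add_param_eq_neg_sum (q x : ℚ) {j n : ℕ} (h : j < n) (r : ℕ) :
    qPhi q (r + n) j x = -∑ t ∈ range n, (gaussPoly 1 q n).coeff t * qPhi q (r + t) j x := by
  have := congrFun (aeval_gaussPoly_qPhi_eq_zero q x h) r
  rw [aeval_shiftOp_apply _ (show (gaussPoly 1 q n).natDegree < n + 1 by
    rw [natDegree_gaussPoly]; omega), sum_range_succ, coeff_gaussPoly_self, Pi.zero_apply] at this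
  linear_combination this

theorem hankel_qPhi_eq_mul (q x : ℚ) (r N : ℕ) (f : Fin N → ℕ) :
    (Matrix.of fun i j : Fin N => qPhi q r (i + f j) x) =
      (Matrix.of fun i k : Fin N => phiCoeff q r x i k) *
        Matrix.of fun k j : Fin N => qPhi q (r + k) (f j) x := by
  ext i j
  rw [Matrix.mul_apply, Matrix.of_apply, qPhi_add q x r (f j) i.isLt, ← Fin.sum_univ_eq_sum_range]
  rfl

-- Rows `k < m` are `qPhi_succ`; the last row also eliminates `Φ_j(x, r+m+1)` by
-- `qPhi_add_param_eq_neg_sum`.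
def phiStepMatrix (q x : ℚ) (r m : ℕ) : Matrix (Fin (m + 1)) (Fin (m + 1)) ℚ :=
  bidiagWithLastRow m (fun k => qb q (r + k)) (fun k => q ^ (r + k) * x)
    fun t => (if t = m then qb q (r + m) else 0) - q ^ (r + m) * x * (gaussPoly 1 q (m + 1)).coeff t

theorem qPhi_succ_matrix_eq_phiStepMatrix_mul (q x : ℚ) (r m : ℕ) :
    (Matrix.of fun k j : Fin (m + 1) => qPhi q (r + k) (j + 1) x) =
      phiStepMatrix q x r m * Matrix.of fun k j : Fin (m + 1) => qPhi q (r + k) j x := by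
  ext k j
  rw [phiStepMatrix,
    bidiagWithLastRow_mul_of_apply m _ _ _ fun k (j : Fin (m + 1)) => qPhi q (r + k) j x]
  simp only [Matrix.of_apply]
  split_ifs with hk
  · simp only [sub_mul, sum_sub_distrib, ite_mul, zero_mul, sum_ite_eq', mem_range, lt_add_one,
      if_true, mul_assoc, ← mul_sum]
    rw [hk, qPhi_succ, add_assoc r m 1, qPhi_add_param_eq_neg_sum q x j.isLt r]
    ring
  · rw [qPhi_succ, add_assoc]

theorem det_phiStepMatrix (q x : ℚ) (r m : ℕ) :
    (phiStepMatrix q x r m).det =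
      ∑ k ∈ range (m + 1 + 1), qbinom q (m + 1) k * (q ^ (m + r) * x) ^ k *
        ∏ j ∈ range (m + 1 - k), qb q (r + j) := by
  rw [phiStepMatrix, det_bidiagWithLastRow_sub_mul _ _ _ _ (coeff_gaussPoly_self 1 q (m + 1)),
    ← sum_range_reflect]
  refine sum_congr rfl fun k hk_mem => ?_
  have hk : k ≤ m + 1 := Nat.lt_succ_iff.1 (mem_range.1 hk_mem)
  have hsign : (-1 : ℚ) ^ (m + 1 + (m + 1 - k)) * (-1) ^ k = 1 := by
    rw [← pow_add, show m + 1 + (m + 1 - k) + k = 2 * (m + 1) by omega, pow_mul, neg_one_sq,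
      one_pow]
  have hpow := prod_Ico_sub_mul_pow_choose_two q x r hk
  rw [Nat.add_sub_cancel] at hpow
  rw [Nat.add_sub_cancel, coeff_gaussPoly_sub 1 q hk, ← hpow]
  linear_combination (qbinom q (m + 1) k * q ^ k.choose 2 *
    (∏ j ∈ range (m + 1 - k), qb q (r + j)) * ∏ i ∈ Ico (m + 1 - k) (m + 1), (q ^ (r + i) * x)) *
      hsign

/-- Shifted Hankel determinant of the Φ_n. -/
theorem hankel_qPhi_shifted (q : ℚ) (r : ℕ) (x : ℚ) (n : ℕ) :
    Matrix.det (Matrix.of fun i j : Fin n => qPhi q r ((i : ℕ) + (j : ℕ) + 1) x) =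
      Matrix.det (Matrix.of fun i j : Fin n => qPhi q r ((i : ℕ) + (j : ℕ)) x) *
        ∑ k ∈ Finset.range (n + 1),
          qbinom q n k * (q ^ (n - 1 + r) * x) ^ k *
            ∏ j ∈ Finset.range (n - k), qb q (r + j) := by
  cases n with
  | zero => simp [qbinom]
  | succ m =>
    have h1 : (Matrix.of fun i j : Fin (m + 1) => qPhi q r (i + j + 1) x) = _ :=
      hankel_qPhi_eq_mul q x r (m + 1) fun j => j + 1
    have h0 : (Matrix.of fun i j : Fin (m + 1) => qPhi q r (i + j) x) = _ :=
      hankel_qPhi_eq_mul q x r (m + 1) fun j => j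
    rw [h1, h0, qPhi_succ_matrix_eq_phiStepMatrix_mul, Matrix.det_mul, Matrix.det_mul,
      Matrix.det_mul, det_phiStepMatrix, Nat.add_sub_cancel]
    ring

end
end
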